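/- Let t be a positive integer and G a flower group of type (c₀; c₁, …, c_k). For 0 ≤ i ≤ k write c_i = ν_i·ω_i where ω_i is the greatest divisor of c_i that is relatively prime to t. Then the number of φ_t-periodic elements of G equals ω₁ + ω₂ + ⋯ + ω_k − (k−1)·ω₀. -/

import Mathlib

/-- A cyclic subgroup `C` of `G` is a μ-subgroup if it is not contained in any cyclic
subgroup of `G` other than `C` itself. -/
def IsMuSubgroup {G : Type*} [Group G] (C : Subgroup G) : Prop :=
  IsCyclic ↥C ∧ ∀ K : Subgroup G, IsCyclic ↥K → C ≤ K → C = K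

/-- A noncyclic group `G` is a flower group with pistil `C0` if any two distinct
μ-subgroups of `G` intersect exactly in `C0`. -/
def IsFlowerGroup {G : Type*} [Group G] (C0 : Subgroup G) : Prop :=
  ¬ IsCyclic G ∧
    ∀ C C' : Subgroup G, IsMuSubgroup C → IsMuSubgroup C' → C ≠ C' → C ⊓ C' = C0

/-!
A power `g ^ t ^ m` returns to `g` exactly when `t ^ m ≡ 1` modulo the order of `g`, which is
possible iff the order is coprime to `t`. Every element lies in a petal and two distinct petals
meet in the pistil, so inclusion–exclusion over the petals gives
`#periodic + (k - 1) · #(periodic ∩ C₀) = Σᵢ #(periodic ∩ Cᵢ)`. In a cyclic group of order `c`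
the elements of order coprime to `t` are exactly the solutions of `x ^ ω = 1`, where `ω` is the
largest divisor of `c` coprime to `t`, and there are `ω` of them.
-/

open Finset

theorem IsOfFinOrder.exists_pow_pow_eq_self_iff_coprime {M : Type*} [Monoid M] {g : M}
    (hg : IsOfFinOrder g) (t : ℕ) :
    (∃ m : ℕ, 1 ≤ m ∧ g ^ t ^ m = g) ↔ (orderOf g).Coprime t := by
  constructor
  · rintro ⟨m, hm, hgm⟩
    have hmod : t ^ m ≡ 1 [MOD orderOf g] := hg.pow_eq_pow_iff_modEq.1 (by rwa [pow_one])
    have hcop : (t ^ m).Coprime (orderOf g) := by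
      rw [Nat.Coprime, hmod.gcd_eq, Nat.gcd_one_left]
    exact ((Nat.coprime_pow_left_iff hm t _).1 hcop).symm
  · intro h
    refine ⟨(orderOf g).totient, Nat.totient_pos.2 hg.orderOf_pos, ?_⟩
    have := (hg.pow_eq_pow_iff_modEq (m := 1)).2 (Nat.ModEq.pow_totient h.symm)
    rwa [pow_one] at this

theorem Nat.dvd_of_isGreatest_coprime_dvd {n t w d : ℕ} (hn : n ≠ 0)
    (hw : IsGreatest {d | d ∣ n ∧ d.Coprime t} w) (hd : d ∣ n) (hdt : d.Coprime t) : d ∣ w := by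
  have hlcm : Nat.lcm d w ∈ {d | d ∣ n ∧ d.Coprime t} :=
    ⟨Nat.lcm_dvd hd hw.1.1,
      (Nat.Coprime.mul_left hdt hw.1.2).coprime_dvd_left (Nat.lcm_dvd_mul d w)⟩
  have hlcm0 : Nat.lcm d w ≠ 0 :=
    Nat.lcm_ne_zero (ne_zero_of_dvd_ne_zero hn hd) (ne_zero_of_dvd_ne_zero hn hw.1.1)
  have : Nat.lcm d w = w :=
    le_antisymm (hw.2 hlcm) (Nat.le_of_dvd (Nat.pos_of_ne_zero hlcm0) (Nat.dvd_lcm_right d w))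
  exact this ▸ Nat.dvd_lcm_left d w

theorem IsCyclic.card_coprime_orderOf {H : Type*} [Group H] [Finite H] [IsCyclic H] {t w : ℕ}
    (hw : IsGreatest {d | d ∣ Nat.card H ∧ d.Coprime t} w) :
    Nat.card {x : H // (orderOf x).Coprime t} = w := by
  let := IsCyclic.commGroup (α := H)
  have hker : ∀ x : H, (orderOf x).Coprime t ↔ x ∈ (powMonoidHom w : H →* H).ker := fun x => by
    rw [MonoidHom.mem_ker, powMonoidHom_apply, ← orderOf_dvd_iff_pow_eq_one]
    exact ⟨Nat.dvd_of_isGreatest_coprime_dvd Nat.card_pos.ne' hw (orderOf_dvd_natCard x),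
      hw.1.2.coprime_dvd_left⟩
  rw [Nat.card_congr (Equiv.subtypeEquivRight hker)]
  exact (IsCyclic.card_powMonoidHom_ker H w).trans (Nat.gcd_eq_right hw.1.1)

theorem Subgroup.card_mem_coprime_orderOf {G : Type*} [Group G] [Finite G] (K : Subgroup G)
    [IsCyclic K] {t w : ℕ} (hw : IsGreatest {d | d ∣ Nat.card K ∧ d.Coprime t} w) :
    Nat.card {g : G // g ∈ K ∧ (orderOf g).Coprime t} = w := by
  rw [← Nat.card_congr
    (Equiv.subtypeSubtypeEquivSubtypeInter (· ∈ K) fun g => (orderOf g).Coprime t)]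
  simp only [Subgroup.orderOf_coe]
  exact IsCyclic.card_coprime_orderOf hw

theorem Finset.card_biUnion_add_mul_card_eq_sum {ι α : Type*} [Fintype ι] [DecidableEq α]
    (f : ι → Finset α) (s₀ : Finset α) (h₀ : ∀ i, s₀ ⊆ f i)
    (hf : ∀ i j, i ≠ j → f i ∩ f j ⊆ s₀) :
    #(univ.biUnion f) + (Fintype.card ι - 1) * #s₀ = ∑ i, #(f i) := by
  cases isEmpty_or_nonempty ι
  · simp
  obtain ⟨i₀⟩ := ‹Nonempty ι›
  have hunion : univ.biUnion f = s₀ ∪ univ.biUnion fun i => f i \ s₀ := by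
    ext x
    simp only [mem_biUnion, mem_union, mem_sdiff, mem_univ, true_and]
    constructor
    · rintro ⟨i, hi⟩
      by_cases hx : x ∈ s₀
      exacts [Or.inl hx, Or.inr ⟨i, hi, hx⟩]
    · rintro (hx | ⟨i, hi, -⟩)
      exacts [⟨i₀, h₀ i₀ hx⟩, ⟨i, hi⟩]
  have hdisj : Disjoint s₀ (univ.biUnion fun i => f i \ s₀) := by
    simp only [disjoint_biUnion_right, mem_univ, forall_const]
    exact fun i => disjoint_sdiff
  have hpair : ((univ : Finset ι) : Set ι).PairwiseDisjoint fun i => f i \ s₀ := by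
    intro i _ j _ hij
    rw [Function.onFun, disjoint_left]
    intro x hi hj
    exact (mem_sdiff.1 hi).2 (hf i j hij (mem_inter.2 ⟨(mem_sdiff.1 hi).1, (mem_sdiff.1 hj).1⟩))
  obtain ⟨k, hk⟩ := Nat.exists_eq_add_of_lt (Fintype.card_pos (α := ι))
  calc #(univ.biUnion f) + (Fintype.card ι - 1) * #s₀
      = ∑ i, #(f i \ s₀) + Fintype.card ι • #s₀ := by
        rw [hunion, card_union_of_disjoint hdisj, card_biUnion hpair, hk, smul_eq_mul]
        simp only [Nat.add_sub_cancel]; ring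
    _ = ∑ i, #(f i) := by
        rw [← card_univ, ← sum_const, ← sum_add_distrib]
        exact sum_congr rfl fun i _ => card_sdiff_add_card_eq_card (h₀ i)

theorem exists_isMuSubgroup_mem {G : Type*} [Group G] [Finite G] (g : G) :
    ∃ C : Subgroup G, IsMuSubgroup C ∧ g ∈ C := by
  obtain ⟨C, hC, hmax⟩ := (Set.toFinite {K : Subgroup G | IsCyclic K ∧ g ∈ K}).exists_maximalFor
    id _ ⟨Subgroup.zpowers g, inferInstance, Subgroup.mem_zpowers g⟩
  exact ⟨C, ⟨hC.1, fun K hK hCK => le_antisymm hCK (hmax ⟨hK, hCK hC.2⟩ hCK)⟩, hC.2⟩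

namespace IsFlowerGroup

variable {G : Type*} [Group G] [Finite G] {C0 : Subgroup G}

theorem le_of_isMuSubgroup (hG : IsFlowerGroup C0) {C : Subgroup G} (hC : IsMuSubgroup C) :
    C0 ≤ C := by
  obtain ⟨g, hg⟩ : ∃ g, g ∉ C := by
    by_contra! h
    rw [(Subgroup.eq_top_iff' C).2 h] at hC
    exact hG.1 (Subgroup.topEquiv.isCyclic.1 hC.1)
  obtain ⟨C', hC', hgC'⟩ := exists_isMuSubgroup_mem g
  rw [← hG.2 C C' hC hC' (by rintro rfl; exact hg hgC')]
  exact inf_le_left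

theorem isCyclic_pistil (hG : IsFlowerGroup C0) : IsCyclic C0 := by
  obtain ⟨C, hC, -⟩ := exists_isMuSubgroup_mem (1 : G)
  have := hC.1
  exact Subgroup.isCyclic_of_le (hG.le_of_isMuSubgroup hC)

theorem card_add_mul_card_pistil_eq_sum_card_petal (hG : IsFlowerGroup C0) {ι : Type*}
    [Fintype ι] {P : ι → Subgroup G} (hinj : Function.Injective P)
    (hpetals : ∀ C : Subgroup G, IsMuSubgroup C ↔ ∃ i, C = P i) (p : G → Prop) :
    Nat.card {g // p g} + (Fintype.card ι - 1) * Nat.card {g // g ∈ C0 ∧ p g} =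
      ∑ i, Nat.card {g // g ∈ P i ∧ p g} := by
  classical
  have := Fintype.ofFinite G
  have hmu (i : ι) : IsMuSubgroup (P i) := (hpetals _).2 ⟨i, rfl⟩
  have hcover :
      univ.biUnion (fun i => ({g | g ∈ P i ∧ p g} : Finset G)) = ({g | p g} : Finset G) := by
    ext g
    simp only [mem_biUnion, mem_filter, mem_univ, true_and]
    obtain ⟨C, hC, hgC⟩ := exists_isMuSubgroup_mem g
    obtain ⟨i, rfl⟩ := (hpetals C).1 hC
    exact ⟨fun ⟨_, _, h⟩ => h, fun h => ⟨i, hgC, h⟩⟩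
  simp only [Nat.card_eq_fintype_card, Fintype.card_subtype]
  rw [← hcover]
  refine card_biUnion_add_mul_card_eq_sum _ _ (fun i g => ?_) (fun i j hij g => ?_)
  · simp only [mem_filter, mem_univ, true_and]
    exact And.imp_left (hG.le_of_isMuSubgroup (hmu i) ·)
  · simp only [mem_inter, mem_filter, mem_univ, true_and]
    rintro ⟨⟨hi, hp⟩, hj, -⟩
    exact ⟨hG.2 _ _ (hmu i) (hmu j) (hinj.ne hij) ▸ ⟨hi, hj⟩, hp⟩

end IsFlowerGroup

theorem stmt14_general (t : ℕ) {G : Type*} [Group G] [Finite G]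
    (C0 : Subgroup G) (hG : IsFlowerGroup C0)
    (k : ℕ) (P : Fin k → Subgroup G) (hinj : Function.Injective P)
    (hpetals : ∀ C : Subgroup G, IsMuSubgroup C ↔ ∃ i, C = P i)
    (ω0 : ℕ) (ω : Fin k → ℕ)
    (hω0dvd : ω0 ∣ Nat.card C0) (hω0cop : Nat.Coprime ω0 t)
    (hω0max : ∀ d : ℕ, d ∣ Nat.card C0 → Nat.Coprime d t → d ≤ ω0)
    (hωdvd : ∀ i, ω i ∣ Nat.card (P i)) (hωcop : ∀ i, Nat.Coprime (ω i) t)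
    (hωmax : ∀ i, ∀ d : ℕ, d ∣ Nat.card (P i) → Nat.Coprime d t → d ≤ ω i) :
    Nat.card {g : G // ∃ m : ℕ, 1 ≤ m ∧ g ^ t ^ m = g} + (k - 1) * ω0 = ∑ i, ω i := by
  have hcount := hG.card_add_mul_card_pistil_eq_sum_card_petal hinj hpetals
    fun g => (orderOf g).Coprime t
  have := hG.isCyclic_pistil
  rw [Fintype.card_fin,
    C0.card_mem_coprime_orderOf ⟨⟨hω0dvd, hω0cop⟩, fun d hd => hω0max d hd.1 hd.2⟩] at hcount
  rw [Nat.card_congr (Equiv.subtypeEquivRight fun g =>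
    (isOfFinOrder_of_finite g).exists_pow_pow_eq_self_iff_coprime t), hcount]
  refine sum_congr rfl fun i _ => ?_
  have := ((hpetals (P i)).2 ⟨i, rfl⟩).1
  exact (P i).card_mem_coprime_orderOf ⟨⟨hωdvd i, hωcop i⟩, fun d hd => hωmax i d hd.1 hd.2⟩

/-- If G is a flower group of type (c₀; c₁, …, c_k) and ω_i is the greatest
divisor of c_i coprime to t, then the number of φ_t-periodic elements of G equals
ω₁ + ⋯ + ω_k − (k−1)·ω₀. -/
theorem stmt14 (t : ℕ) (ht : 0 < t) {G : Type*} [Group G] [Finite G]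
    (C0 : Subgroup G) (hG : IsFlowerGroup C0)
    (k : ℕ) (P : Fin k → Subgroup G) (hinj : Function.Injective P)
    (hpetals : ∀ C : Subgroup G, IsMuSubgroup C ↔ ∃ i, C = P i)
    (ω0 : ℕ) (ω : Fin k → ℕ)
    (hω0dvd : ω0 ∣ Nat.card C0) (hω0cop : Nat.Coprime ω0 t)
    (hω0max : ∀ d : ℕ, d ∣ Nat.card C0 → Nat.Coprime d t → d ≤ ω0)
    (hωdvd : ∀ i, ω i ∣ Nat.card (P i)) (hωcop : ∀ i, Nat.Coprime (ω i) t)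
    (hωmax : ∀ i, ∀ d : ℕ, d ∣ Nat.card (P i) → Nat.Coprime d t → d ≤ ω i) :
    Nat.card {g : G // ∃ m : ℕ, 1 ≤ m ∧ g ^ t ^ m = g} + (k - 1) * ω0 = ∑ i, ω i :=
  stmt14_general t C0 hG k P hinj hpetals ω0 ω hω0dvd hω0cop hω0max hωdvd hωcop hωmax
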